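/- arXiv:1905.07532 — 6 statements merged into one kernel-verified Lean document; each statement's English description precedes it below -/
import Mathlib

section
/- Let r, r̄, p, q be nonnegative integers with p < r̄ and r = q·r̄ + p. Then for every nonnegative integer k, [r - k·r̄]^+ = p·[q + 1 - k]^+ + (r̄ - p)·[q - k]^+. -/
/-! Since `r = q * rbar + p`, we have `r - k * rbar = p * (q + 1 - k) + (rbar - p) * (q - k)`
with nonnegative coefficients. The integers `q + 1 - k` and `q - k` are consecutive, so they
are both `≥ 0` or both `≤ 0`, and on such a pair taking positive parts commutes with
nonnegative linear combinations. -/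

lemma max_mul_add_mul_zero_of_sameSign {α : Type*} [Ring α] [LinearOrder α] [IsOrderedRing α]
    {a b x y : α} (ha : 0 ≤ a) (hb : 0 ≤ b) (h : (0 ≤ x ∧ 0 ≤ y) ∨ (x ≤ 0 ∧ y ≤ 0)) :
    max (a * x + b * y) 0 = a * max x 0 + b * max y 0 := by
  rcases h with ⟨hx, hy⟩ | ⟨hx, hy⟩
  · rw [max_eq_left hx, max_eq_left hy, max_eq_left (by positivity)]
  · rw [max_eq_right hx, max_eq_right hy, max_eq_right, mul_zero, mul_zero, add_zero]
    exact add_nonpos (mul_nonpos_of_nonneg_of_nonpos ha hx) (mul_nonpos_of_nonneg_of_nonpos hb hy)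

/-- Decomposition of the positive part via Euclidean division. -/
theorem posPart_decomp (r rbar p q : ℕ) (hp : p < rbar) (hr : r = q * rbar + p) (k : ℕ) :
    max ((r : ℤ) - k * rbar) 0
      = p * max ((q : ℤ) + 1 - k) 0 + ((rbar : ℤ) - p) * max ((q : ℤ) - k) 0 := by
  have hsplit : (r : ℤ) - k * rbar = p * ((q : ℤ) + 1 - k) + ((rbar : ℤ) - p) * ((q : ℤ) - k) := by
    subst hr
    push_cast
    ring
  rw [hsplit]
  exact max_mul_add_mul_zero_of_sameSign (by positivity) (by omega) (by omega)
end

section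
/- For nonnegative integer vectors x, y (of lengths N and M respectively), x is weakly submajorized by y if and only if y* is weakly supermajorized by x*. -/
/-- Sum of the `k` largest entries of `x` (padding with zeros if `k` exceeds the length). -/
def topSum {N : ℕ} (x : Fin N → ℕ) (k : ℕ) : ℕ :=
  (Finset.univ.powerset.filter (fun S : Finset (Fin N) => S.card ≤ k)).sup
    (fun S => ∑ i ∈ S, x i)

/-- The partition conjugate: `conj N x j = #{n : x n ≥ j}`. -/
def conj (N : ℕ) (x : Fin N → ℕ) (j : ℕ) : ℕ :=
  (Finset.univ.filter (fun n => j ≤ x n)).card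

/-!
Both sides are comparisons of the excess sums `E x t = ∑ i, (x i - t)₊`. On the conjugate side,
`∑_{t < j ≤ K} x*_j = E x t` by counting the pairs `(i, j)` with `t < j ≤ x i`. On the
majorization side, `topSum x k = min_t (k t + E x t)`: every `k`-set sums to at most
`k t + E x t`, with equality for `k`-sets squeezed between `{x > t}` and `{x ≥ t}`; dually
`E x t = max_k (topSum x k - k t)`, attained at `k = #{x > t}`.
-/

open Finset

def sumExcess {ι : Type*} [Fintype ι] (x : ι → ℕ) (t : ℕ) : ℕ := ∑ i, (x i - t)

section

variable {ι : Type*} [Fintype ι] (x : ι → ℕ) (t : ℕ)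

lemma sumExcess_eq_zero {x : ι → ℕ} {t : ℕ} (hx : ∀ i, x i ≤ t) : sumExcess x t = 0 :=
  Finset.sum_eq_zero fun i _ => Nat.sub_eq_zero_of_le (hx i)

lemma sum_le_card_mul_add_sumExcess (S : Finset ι) : ∑ i ∈ S, x i ≤ #S * t + sumExcess x t :=
  calc ∑ i ∈ S, x i ≤ ∑ i ∈ S, (t + (x i - t)) := sum_le_sum fun i _ => le_add_tsub
    _ = #S * t + ∑ i ∈ S, (x i - t) := by rw [sum_add_distrib, sum_const, smul_eq_mul]
    _ ≤ #S * t + sumExcess x t := Nat.add_le_add_left (sum_le_sum_of_subset (subset_univ S)) _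

lemma sum_eq_card_mul_add_sumExcess {S : Finset ι} (hS_above : ∀ i, t < x i → i ∈ S)
    (hS_below : ∀ i ∈ S, t ≤ x i) : ∑ i ∈ S, x i = #S * t + sumExcess x t := by
  have h_outside : ∑ i ∈ S, (x i - t) = sumExcess x t :=
    sum_subset (subset_univ S) fun i _ hi => Nat.sub_eq_zero_of_le (not_lt.1 (mt (hS_above i) hi))
  calc ∑ i ∈ S, x i = ∑ i ∈ S, (t + (x i - t)) :=
        sum_congr rfl fun i hi => (Nat.add_sub_of_le (hS_below i hi)).symm
    _ = #S * t + sumExcess x t := by rw [sum_add_distrib, sum_const, smul_eq_mul, h_outside]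

end

section

variable {N : ℕ} (x : Fin N → ℕ)

lemma sum_le_topSum {k : ℕ} {S : Finset (Fin N)} (hS : #S ≤ k) :
    ∑ i ∈ S, x i ≤ topSum x k :=
  le_sup (f := fun T => ∑ i ∈ T, x i) (mem_filter.2 ⟨mem_powerset.2 (subset_univ S), hS⟩)

lemma topSum_le_mul_add_sumExcess (k t : ℕ) : topSum x k ≤ k * t + sumExcess x t := by
  refine Finset.sup_le fun S hS => ?_
  calc ∑ i ∈ S, x i ≤ #S * t + sumExcess x t := sum_le_card_mul_add_sumExcess x t S
    _ ≤ k * t + sumExcess x t := by gcongr; exact (mem_filter.1 hS).2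

lemma card_mul_add_sumExcess_le_topSum (t : ℕ) :
    #{i | t < x i} * t + sumExcess x t ≤ topSum x #{i | t < x i} := by
  rw [← sum_eq_card_mul_add_sumExcess x t (by simp) (by simp +contextual [le_of_lt])]
  exact sum_le_topSum x le_rfl

/-- The minimum of `k t + sumExcess x t` over `t` is attained at the least `t` with
`#{x > t} ≤ k`. -/
lemma exists_mul_add_sumExcess_le_topSum (k : ℕ) :
    ∃ t, k * t + sumExcess x t ≤ topSum x k := by
  have h_exists : ∃ t, #{i | t < x i} ≤ k :=
    ⟨univ.sup x, by
      rw [filter_eq_empty_iff.2 fun i _ => not_lt.2 (le_sup (mem_univ i)), card_empty]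
      exact Nat.zero_le k⟩
  set t := Nat.find h_exists
  set B : Finset (Fin N) := {i | t ≤ x i}
  have hA_sub : ({i | t < x i} : Finset (Fin N)) ⊆ B := fun i => by simpa [B] using le_of_lt
  have hA_card : #{i | t < x i} ≤ min k #B :=
    le_min (Nat.find_spec h_exists) (card_le_card hA_sub)
  obtain ⟨S, hAS, hSB, hS_card⟩ := exists_subsuperset_card_eq hA_sub hA_card (min_le_right _ _)
  have hS_mul : #S * t = k * t := by
    rcases Nat.eq_zero_or_pos t with ht | ht
    · simp [ht]
    have hB_card : k < #B := by
      have h_min := Nat.find_min h_exists (Nat.sub_lt ht one_pos)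
      rwa [show ({i | t - 1 < x i} : Finset (Fin N)) = B from filter_congr fun i _ => by omega,
        not_le] at h_min
    rw [hS_card, min_eq_left hB_card.le]
  refine ⟨t, ?_⟩
  rw [← hS_mul, ← sum_eq_card_mul_add_sumExcess x t (fun i hi => hAS (by simpa using hi))
    (fun i hi => by simpa [B] using hSB hi)]
  exact sum_le_topSum x (hS_card.le.trans (min_le_left _ _))

theorem topSum_le_topSum_iff_sumExcess_le {M : ℕ} (y : Fin M → ℕ) :
    (∀ k, topSum x k ≤ topSum y k) ↔ ∀ t, sumExcess x t ≤ sumExcess y t := by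
  constructor
  · intro h t
    have := (card_mul_add_sumExcess_le_topSum x t).trans <|
      (h _).trans (topSum_le_mul_add_sumExcess y #{i | t < x i} t)
    omega
  · intro h k
    obtain ⟨t, ht⟩ := exists_mul_add_sumExcess_le_topSum y k
    calc topSum x k ≤ k * t + sumExcess x t := topSum_le_mul_add_sumExcess x k t
      _ ≤ k * t + sumExcess y t := Nat.add_le_add_left (h t) _
      _ ≤ topSum y k := ht

lemma sum_conj_Icc {K : ℕ} (hx : ∀ i, x i ≤ K) (t : ℕ) :
    ∑ j ∈ Icc (t + 1) K, conj N x j = sumExcess x t := by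
  have h_count : ∀ i, #{j ∈ Icc (t + 1) K | j ≤ x i} = x i - t := fun i => by
    rw [show {j ∈ Icc (t + 1) K | j ≤ x i} = Icc (t + 1) (x i) by
      ext j; simp only [mem_filter, mem_Icc]; have := hx i; omega, Nat.card_Icc]
    omega
  simpa [conj, sumExcess, bipartiteAbove, bipartiteBelow, h_count] using
    sum_card_bipartiteAbove_eq_sum_card_bipartiteBelow (s := Icc (t + 1) K) (t := univ)
      (r := fun j i => j ≤ x i)

end

/-- `x ≺_w y` (weak submajorization) holds iff `y* ≺^w x*` (the conjugate of `y` is weakly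
supermajorized by the conjugate of `x`).  The conjugates are regarded as non-increasing
vectors of a common length `K`, so that the sum of their `n` smallest entries is the sum of
the entries indexed by `K - n + 1, ..., K`. -/
theorem submajorize_iff_conj_supermajorize (N M K : ℕ) (x : Fin N → ℕ) (y : Fin M → ℕ)
    (hxK : ∀ n, x n ≤ K) (hyK : ∀ m, y m ≤ K) :
    (∀ k, topSum x k ≤ topSum y k) ↔
      (∀ n ≤ K,
        ∑ j ∈ Finset.Icc (K - n + 1) K, conj N x j ≤
          ∑ j ∈ Finset.Icc (K - n + 1) K, conj M y j) := by
  simp only [sum_conj_Icc x hxK, sum_conj_Icc y hyK, topSum_le_topSum_iff_sumExcess_le]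
  constructor
  · exact fun h n _ => h (K - n)
  · intro h t
    rcases le_or_gt t K with ht | ht
    · simpa [Nat.sub_sub_self ht] using h (K - t) (Nat.sub_le K t)
    · simp [sumExcess_eq_zero fun i => (hxK i).trans ht.le]
end

section
/- Given h in N^T and r in N^N, the class of N×T (0,1)-matrices with row sum vector r and column sum vector h is nonempty if and only if ||h||_1 = ||r||_1 and for every k = 0, 1, ..., T, the sum over j > k of the (j-th smallest) entries h_[T], ..., h_[k+1] (i.e., the sum of the T−k smallest entries of h) is at least Σ_{n=1}^N [r_n − k]^+. -/
open Finset

section GaleRyser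

variable {α ι : Type*} [Fintype α]

def GaleRyserCondition (r : α → ℕ) (h : ι → ℕ) (J : Finset ι) : Prop :=
  ∀ S ⊆ J, ∑ j ∈ S, h j ≤ ∑ n, min (r n) #S

theorem sum_le_min_of_le_one {a : ι → ℕ} (ha : ∀ j, a j ≤ 1) {S J : Finset ι} (hS : S ⊆ J) :
    ∑ j ∈ S, a j ≤ min (∑ j ∈ J, a j) #S :=
  le_min (sum_le_sum_of_subset hS) (card_eq_sum_ones S ▸ sum_le_sum fun j _ => ha j)

theorem galeRyserCondition_of_realization {r : α → ℕ} {h : ι → ℕ} {J : Finset ι}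
    {A : α → ι → ℕ} (hA : ∀ n j, A n j ≤ 1) (hrow : ∀ n, ∑ j ∈ J, A n j = r n)
    (hcol : ∀ j ∈ J, ∑ n, A n j = h j) : GaleRyserCondition r h J := by
  intro S hS
  calc ∑ j ∈ S, h j = ∑ j ∈ S, ∑ n, A n j := sum_congr rfl fun j hj => (hcol j (hS hj)).symm
    _ = ∑ n, ∑ j ∈ S, A n j := sum_comm
    _ ≤ ∑ n, min (r n) #S := sum_le_sum fun n _ => hrow n ▸ sum_le_min_of_le_one (hA n) hS

theorem Finset.exists_card_eq_forall_le {β : Type*} [LinearOrder β] (f : α → β) {m : ℕ}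
    (hm : m ≤ Fintype.card α) : ∃ R : Finset α, #R = m ∧ ∀ p ∈ R, ∀ q ∉ R, f q ≤ f p := by
  classical
  induction m with
  | zero => exact ⟨∅, rfl, by simp⟩
  | succ m ih =>
    obtain ⟨R, hRcard, hRtop⟩ := ih (by omega)
    have hne : Rᶜ.Nonempty := card_pos.1 (by rw [card_compl]; omega)
    obtain ⟨q₀, hq₀, hq₀max⟩ := Rᶜ.exists_max_image f hne
    rw [mem_compl] at hq₀
    refine ⟨insert q₀ R, by rw [card_insert_of_notMem hq₀, hRcard], ?_⟩
    intro p hp q hq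
    rw [mem_insert, not_or] at hq
    rcases mem_insert.1 hp with rfl | hp
    · exact hq₀max q (mem_compl.2 hq.2)
    · exact hRtop p hp q hq.2

theorem exists_greedy_column (r : α → ℕ) {m : ℕ} (hm : m ≤ ∑ n, min (r n) 1) :
    ∃ c : α → ℕ, (∀ n, c n ≤ 1) ∧ (∀ n, c n ≤ r n) ∧ ∑ n, c n = m ∧
      ∀ p q, c q < c p → r q ≤ r p := by
  classical
  have hmα : m ≤ Fintype.card α :=
    hm.trans ((sum_le_sum fun n _ => min_le_right (r n) 1).trans (by simp))
  obtain ⟨R, hRcard, hRtop⟩ := exists_card_eq_forall_le r hmα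
  refine ⟨fun n => if n ∈ R then 1 else 0, fun n => by dsimp only; split_ifs <;> simp, ?_,
    by rw [sum_boole, filter_mem_eq_inter, univ_inter, hRcard]; rfl, ?_⟩
  · intro p
    dsimp only
    split_ifs with hp
    · by_contra! hrp
      -- `r p = 0` forces `r n = 0` for every `n ∉ R.erase p`
      have : ∑ n, min (r n) 1 ≤ #(R.erase p) := by
        rw [card_eq_sum_ones, ← sum_subset (subset_univ _) (fun n _ hn => ?_)]
        · exact sum_le_sum fun n _ => min_le_right _ _
        · by_cases hnR : n ∈ R
          · obtain rfl : n = p := by simpa [hnR] using hn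
            omega
          · have := hRtop p hp n hnR
            omega
      have hR : 0 < #R := card_pos.2 ⟨p, hp⟩
      rw [card_erase_of_mem hp] at this
      omega
    · exact Nat.zero_le _
  · intro p q hcq
    dsimp only at hcq
    split_ifs at hcq with hq hp <;> first | omega | exact hRtop p ‹_› q ‹_›

theorem GaleRyserCondition.of_insert [DecidableEq ι] {r : α → ℕ} {h : ι → ℕ} {J : Finset ι}
    {j₀ : ι} (hj₀ : j₀ ∉ J) (hcond : GaleRyserCondition r h (insert j₀ J)) {c : α → ℕ}
    (hc : ∀ n, c n ≤ 1) (hcsum : ∑ n, c n = h j₀) (htop : ∀ p q, c q < c p → r q ≤ r p) :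
    GaleRyserCondition (fun n => r n - c n) h J := by
  intro S hS
  beta_reduce
  by_cases hbig : ∀ p, c p = 1 → #S < r p
  · calc ∑ j ∈ S, h j ≤ ∑ n, min (r n) #S := hcond S (hS.trans (subset_insert _ _))
      _ = ∑ n, min (r n - c n) #S := sum_congr rfl fun n _ => by
          have := hc n; have := hbig n; omega
  · push Not at hbig
    obtain ⟨p, hcp, hrp⟩ := hbig
    -- every row missed by `c` has `r n ≤ r p ≤ #S`, so it is already saturated on `S`
    have hrow : ∀ n, min (r n) (#S + 1) ≤ min (r n - c n) #S + c n := by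
      intro n
      have := hc n
      by_cases hcn : c n = 0
      · have := htop p n (by omega); omega
      · omega
    have hj₀S : j₀ ∉ S := fun h => hj₀ (hS h)
    have hins := hcond (insert j₀ S) (insert_subset_insert _ hS)
    rw [sum_insert hj₀S, card_insert_of_notMem hj₀S] at hins
    have := calc ∑ n, min (r n) (#S + 1) ≤ ∑ n, (min (r n - c n) #S + c n) :=
          sum_le_sum fun n _ => hrow n
      _ = ∑ n, min (r n - c n) #S + h j₀ := by rw [sum_add_distrib, hcsum]
    omega

theorem exists_realization_of_galeRyserCondition {h : ι → ℕ} (J : Finset ι) {r : α → ℕ}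
    (hsum : ∑ j ∈ J, h j = ∑ n, r n) (hcond : GaleRyserCondition r h J) :
    ∃ A : α → ι → ℕ, (∀ n j, A n j ≤ 1) ∧ (∀ n, ∑ j ∈ J, A n j = r n) ∧
      ∀ j ∈ J, ∑ n, A n j = h j := by
  classical
  induction J using Finset.induction_on generalizing r with
  | empty =>
    refine ⟨0, fun _ _ => zero_le_one, fun n => ?_, by simp⟩
    simpa [eq_comm] using sum_eq_zero_iff.1 hsum.symm n (mem_univ n)
  | insert j₀ J hj₀ ih =>
    have hcol : h j₀ ≤ ∑ n, min (r n) 1 := by simpa using hcond {j₀} (by simp)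
    obtain ⟨c, hc1, hcr, hcsum, htop⟩ := exists_greedy_column r hcol
    have hsum' : ∑ j ∈ J, h j = ∑ n, (r n - c n) := by
      have : ∑ n, (r n - c n) + ∑ n, c n = ∑ n, r n := by
        rw [← sum_add_distrib]
        exact sum_congr rfl fun n _ => Nat.sub_add_cancel (hcr n)
      rw [sum_insert hj₀] at hsum
      omega
    obtain ⟨A, hA1, hrow, hcolA⟩ := ih hsum' (hcond.of_insert hj₀ hc1 hcsum htop)
    refine ⟨fun n j => if j = j₀ then c n else A n j, fun n j => ?_, fun n => ?_, fun j hj => ?_⟩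
    · dsimp only
      split_ifs
      exacts [hc1 n, hA1 n j]
    · dsimp only
      rw [sum_insert hj₀, if_pos rfl,
        sum_congr rfl fun j hj => if_neg (ne_of_mem_of_not_mem hj hj₀), hrow n]
      have := hcr n
      omega
    · rcases mem_insert.1 hj with rfl | hj
      · simpa using hcsum
      · simpa [ne_of_mem_of_not_mem hj hj₀] using hcolA j hj

end GaleRyser

theorem topSum_le_iff {N : ℕ} {x : Fin N → ℕ} {k b : ℕ} :
    topSum x k ≤ b ↔ ∀ S : Finset (Fin N), #S ≤ k → ∑ i ∈ S, x i ≤ b := by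
  simp [topSum, Finset.sup_le_iff]

theorem topSum_le_sum {N : ℕ} (x : Fin N → ℕ) (k : ℕ) : topSum x k ≤ ∑ i, x i :=
  topSum_le_iff.2 fun S _ => sum_le_sum_of_subset (subset_univ S)

theorem sum_tsub_le_tsub_topSum_iff {α : Type*} [Fintype α] {T : ℕ} {h : Fin T → ℕ}
    {r : α → ℕ} (hsum : ∑ j, h j = ∑ n, r n) (k : ℕ) :
    ∑ n, (r n - k) ≤ (∑ j, h j) - topSum h k ↔ topSum h k ≤ ∑ n, min (r n) k := by
  have hsplit : ∑ n, (r n - k) + ∑ n, min (r n) k = ∑ n, r n := by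
    rw [← sum_add_distrib]
    exact sum_congr rfl fun n _ => tsub_add_min
  have := topSum_le_sum h k
  omega

theorem forall_sum_tsub_le_iff_galeRyserCondition {α : Type*} [Fintype α] {T : ℕ}
    {h : Fin T → ℕ} {r : α → ℕ} (hsum : ∑ j, h j = ∑ n, r n) :
    (∀ k ≤ T, ∑ n, (r n - k) ≤ (∑ j, h j) - topSum h k) ↔ GaleRyserCondition r h univ := by
  simp_rw [sum_tsub_le_tsub_topSum_iff hsum, topSum_le_iff]
  refine ⟨fun H S _ => H #S ((card_le_univ S).trans_eq (Fintype.card_fin T)) S le_rfl,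
    fun H k _ S hS => ?_⟩
  exact (H S (subset_univ S)).trans (sum_le_sum fun n _ => min_le_min_left _ hS)

/-- First-order structure-tensor form of the Gale–Ryser condition: the class of `N × T`
(0,1)-matrices with row sums `r` and column sums `h` is nonempty iff the total sums agree
and, for every `k ≤ T`, the sum of the `T - k` smallest entries of `h` is at least
`∑ n, [r n - k]⁺`. -/
theorem galeRyser_tensor (N T : ℕ) (h : Fin T → ℕ) (r : Fin N → ℕ) :
    (∃ A : Fin N → Fin T → ℕ,
        (∀ n j, A n j ≤ 1) ∧
        (∀ n, ∑ j, A n j = r n) ∧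
        (∀ j, ∑ n, A n j = h j)) ↔
      ((∑ j, h j = ∑ n, r n) ∧
        ∀ k ≤ T, ∑ n, (r n - k) ≤ (∑ j, h j) - topSum h k) := by
  constructor
  · rintro ⟨A, hA, hrow, hcol⟩
    have hsum : ∑ j, h j = ∑ n, r n := by simp_rw [← hcol, ← hrow]; exact sum_comm
    exact ⟨hsum, (forall_sum_tsub_le_iff_galeRyserCondition hsum).2
      (galeRyserCondition_of_realization hA hrow fun j _ => hcol j)⟩
  · rintro ⟨hsum, hineq⟩
    obtain ⟨A, hA, hrow, hcol⟩ := exists_realization_of_galeRyserCondition univ hsum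
      ((forall_sum_tsub_le_iff_galeRyserCondition hsum).1 hineq)
    exact ⟨A, hA, hrow, fun j => hcol j (mem_univ j)⟩
end

section
/- Let F be an N×T (0,1)-matrix (pattern matrix), h in N^T, r in N^N with ||h||_1 = ||r||_1, and suppose F can be described by λ+1 special column indices 0 = T_0 < T_1 < ... < T_λ = T, meaning columns T_i+1 through T_{i+1} of F are all equal for each i, and suppose h is non-increasing within each block of columns (T_i, T_{i+1}]. Then there exists a (0,1)-matrix A of size N×T with row sums r, column sums h, and A ≤ F entrywise, if and only if for all choices of integers k_i with 0 ≤ k_i ≤ T_i − T_{i−1} (i = 1,...,λ): Σ_{i=1}^λ Σ_{j=T_{i−1}+k_i+1}^{T_i} h_j − Σ_{n=1}^N [r_n − Σ_{i=1}^λ k_i·F(n, T_i)]^+ ≥ 0. -/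
/-!
A nonnegative integer matrix `A ≤ F` with row sums `r` and column sums `h` (equal totals) exists
iff every column set `J` has nonnegative surplus `h(J) - ∑ₙ [rₙ - F_n(Jᶜ)]⁺`. Sufficiency is by
induction on the total: the surplus is submodular, so the tight sets containing a column `j₀`
with `h j₀ > 0` have a least element `J₀`. Shrinking `J₀` by `j₀` exhibits a row `n₀` with
capacity at `(n₀, j₀)` and less room outside `J₀` than it needs, and placing one unit at
`(n₀, j₀)` keeps every surplus nonnegative.

When `F` is constant on each column block `(T_{i-1}, T_i]` and `h` is non-increasing there,
replacing `J`, block by block, by the same number of last columns can only lower its surplus;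
the surplus of these tail sets is the structure tensor.
-/

open Finset

namespace CapacitatedMargins

variable {ι κ : Type*}

def IsRealization (R : Finset ι) (C : Finset κ) (F : ι → κ → ℕ) (r : ι → ℕ) (h : κ → ℕ)
    (A : ι → κ → ℕ) : Prop :=
  (∀ n j, A n j ≤ F n j) ∧ (∀ n ∈ R, ∑ j ∈ C, A n j = r n) ∧ (∀ j ∈ C, ∑ n ∈ R, A n j = h j)

section Surplus

variable [DecidableEq κ] (R : Finset ι) (C : Finset κ) (F : ι → κ → ℕ) (r : ι → ℕ) (h : κ → ℕ)

/-- Row `n` has room for at most `∑ j ∈ C \ J, F n j` outside `J`, so it must put at least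
this much into the columns of `J`. -/
def forcedLoad (J : Finset κ) (n : ι) : ℤ :=
  max ((r n : ℤ) - ∑ j ∈ C \ J, (F n j : ℤ)) 0

def surplus (J : Finset κ) : ℤ :=
  ∑ j ∈ J, (h j : ℤ) - ∑ n ∈ R, forcedLoad C F r J n

variable {R C F r h}

theorem forcedLoad_le_sum {A : ι → κ → ℕ} (hA : IsRealization R C F r h A) {J : Finset κ}
    (hJ : J ⊆ C) {n : ι} (hn : n ∈ R) : forcedLoad C F r J n ≤ ∑ j ∈ J, (A n j : ℤ) := by
  have hrow : ∑ j ∈ J, (A n j : ℤ) + ∑ j ∈ C \ J, (A n j : ℤ) = r n := by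
    rw [← sum_union disjoint_sdiff, union_sdiff_of_subset hJ, ← hA.2.1 n hn]
    push_cast; rfl
  have hcap : ∑ j ∈ C \ J, (A n j : ℤ) ≤ ∑ j ∈ C \ J, (F n j : ℤ) :=
    sum_le_sum fun j _ => by exact_mod_cast hA.1 n j
  have hnonneg : 0 ≤ ∑ j ∈ J, (A n j : ℤ) := sum_nonneg fun j _ => by positivity
  exact max_le (by linarith) hnonneg

theorem surplus_nonneg_of_isRealization {A : ι → κ → ℕ} (hA : IsRealization R C F r h A)
    {J : Finset κ} (hJ : J ⊆ C) : 0 ≤ surplus R C F r h J := by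
  have hcol : ∑ j ∈ J, (h j : ℤ) = ∑ n ∈ R, ∑ j ∈ J, (A n j : ℤ) := by
    rw [sum_comm]
    refine sum_congr rfl fun j hj => ?_
    rw [← hA.2.2 j (hJ hj)]
    push_cast; rfl
  rw [surplus, hcol, sub_nonneg]
  exact sum_le_sum fun n hn => forcedLoad_le_sum hA hJ hn

/-- `t ↦ max (a - t) 0` is convex, and the complements of `J₁ ∩ J₂` and `J₁ ∪ J₂` spread
further apart than those of `J₁` and `J₂` with the same total. -/
theorem forcedLoad_add_forcedLoad_le (J₁ J₂ : Finset κ) (n : ι) :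
    forcedLoad C F r J₁ n + forcedLoad C F r J₂ n
      ≤ forcedLoad C F r (J₁ ∩ J₂) n + forcedLoad C F r (J₁ ∪ J₂) n := by
  simp only [forcedLoad, sdiff_inter_distrib_right, sdiff_union_distrib]
  have h₁ : ∑ j ∈ (C \ J₁) ∩ (C \ J₂), (F n j : ℤ) ≤ ∑ j ∈ C \ J₁, (F n j : ℤ) :=
    sum_le_sum_of_subset_of_nonneg inter_subset_left fun _ _ _ => by positivity
  have h₂ : ∑ j ∈ (C \ J₁) ∩ (C \ J₂), (F n j : ℤ) ≤ ∑ j ∈ C \ J₂, (F n j : ℤ) :=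
    sum_le_sum_of_subset_of_nonneg inter_subset_right fun _ _ _ => by positivity
  have h₃ := sum_union_inter (s₁ := C \ J₁) (s₂ := C \ J₂) (f := fun j => (F n j : ℤ))
  omega

theorem surplus_inter_add_surplus_union_le (J₁ J₂ : Finset κ) :
    surplus R C F r h (J₁ ∩ J₂) + surplus R C F r h (J₁ ∪ J₂)
      ≤ surplus R C F r h J₁ + surplus R C F r h J₂ := by
  have hh := sum_union_inter (s₁ := J₁) (s₂ := J₂) (f := fun j => (h j : ℤ))
  have hload := sum_le_sum fun n (_ : n ∈ R) => forcedLoad_add_forcedLoad_le (C := C) (F := F)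
    (r := r) J₁ J₂ n
  simp only [sum_add_distrib] at hload
  simp only [surplus]
  linarith

theorem surplus_self (hsum : ∑ j ∈ C, h j = ∑ n ∈ R, r n) : surplus R C F r h C = 0 := by
  simp only [surplus, forcedLoad, sdiff_self, bot_eq_empty, sum_empty, sub_zero]
  rw [sum_congr rfl fun n _ => max_eq_left (Nat.cast_nonneg (r n)), sub_eq_zero]
  exact_mod_cast hsum

theorem exists_minimal_tight (hsum : ∑ j ∈ C, h j = ∑ n ∈ R, r n)
    (hcond : ∀ J ⊆ C, 0 ≤ surplus R C F r h J) {j₀ : κ} (hj₀ : j₀ ∈ C) :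
    ∃ J₀ ⊆ C, j₀ ∈ J₀ ∧ surplus R C F r h J₀ = 0 ∧
      ∀ J ⊆ C, j₀ ∈ J → surplus R C F r h J = 0 → J₀ ⊆ J := by
  set tight := C.powerset.filter fun J => j₀ ∈ J ∧ surplus R C F r h J = 0
  have hC : C ∈ tight := by simp [tight, hj₀, surplus_self hsum]
  have hclosed : ∀ J₁ ∈ (tight : Set (Finset κ)), ∀ J₂ ∈ (tight : Set (Finset κ)),
      J₁ ⊓ J₂ ∈ (tight : Set (Finset κ)) := by
    simp only [tight, coe_filter, mem_powerset, Set.mem_ofPred_eq, inf_eq_inter]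
    rintro J₁ ⟨hJ₁C, hj₁, hs₁⟩ J₂ ⟨hJ₂C, hj₂, hs₂⟩
    have hsub := surplus_inter_add_surplus_union_le (R := R) (C := C) (F := F) (r := r) (h := h)
      J₁ J₂
    have hinter := hcond (J₁ ∩ J₂) (inter_subset_left.trans hJ₁C)
    have hunion := hcond _ (union_subset hJ₁C hJ₂C)
    exact ⟨inter_subset_left.trans hJ₁C, mem_inter.mpr ⟨hj₁, hj₂⟩, by linarith⟩
  have hmem : tight.inf' ⟨C, hC⟩ id ∈ tight := inf'_mem _ hclosed _ _ _ fun J hJ => hJ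
  simp only [tight, mem_filter, mem_powerset] at hmem
  refine ⟨_, hmem.1, hmem.2.1, hmem.2.2, fun J hJ hj hs => inf'_le id ?_⟩
  simp [hJ, hj, hs]

/-- Removing `j₀` from a tight set must raise the forced load of some row. -/
theorem exists_pivot_row {J₀ : Finset κ} (hJ₀ : J₀ ⊆ C) {j₀ : κ} (hj₀ : j₀ ∈ J₀)
    (htight : surplus R C F r h J₀ = 0) (hcond : 0 ≤ surplus R C F r h (J₀.erase j₀))
    (hpos : 0 < h j₀) :
    ∃ n₀ ∈ R, 0 < F n₀ j₀ ∧ ∑ j ∈ C \ J₀, (F n₀ j : ℤ) < r n₀ := by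
  by_contra! hnone
  have hload : ∀ n ∈ R, forcedLoad C F r (J₀.erase j₀) n = forcedLoad C F r J₀ n := by
    intro n hn
    simp only [forcedLoad, sdiff_erase (hJ₀ hj₀), sum_insert (fun h => (mem_sdiff.mp h).2 hj₀)]
    rcases Nat.eq_zero_or_pos (F n j₀) with hzero | hF
    · simp [hzero]
    · have := hnone n hn hF
      rw [max_eq_right (by omega), max_eq_right (by omega)]
  have herase : surplus R C F r h (J₀.erase j₀) = surplus R C F r h J₀ - h j₀ := by
    simp only [surplus, sum_congr rfl hload, sum_erase_eq_sub hj₀]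
    ring
  have : (0 : ℤ) < h j₀ := by exact_mod_cast hpos
  linarith

end Surplus

section Reduction

variable [DecidableEq ι] [DecidableEq κ] {R : Finset ι} {C : Finset κ} {F : ι → κ → ℕ}
  {r : ι → ℕ} {h : κ → ℕ} {n₀ : ι} {j₀ : κ}

theorem single_single_apply (n : ι) (j : κ) :
    (Pi.single n₀ (Pi.single j₀ 1) : ι → κ → ℕ) n j = if n = n₀ ∧ j = j₀ then 1 else 0 := by
  rcases eq_or_ne n n₀ with rfl | hn
  · simp [Pi.single_apply]
  · simp [hn]

theorem natCast_sub_single_apply {α : Type*} [DecidableEq α] {f : α → ℕ} {i : α} (hi : 0 < f i)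
    (x : α) : (((f - Pi.single i 1 : α → ℕ) x : ℕ) : ℤ) = f x - if x = i then 1 else 0 := by
  rcases eq_or_ne x i with rfl | hx
  · simp [Nat.cast_sub hi]
  · simp [hx]

theorem sum_sub_single_apply {α : Type*} [DecidableEq α] {s : Finset α} {f : α → ℕ} {i : α}
    (hi : i ∈ s) (hf : 0 < f i) : ∑ x ∈ s, (f - Pi.single i 1 : α → ℕ) x = ∑ x ∈ s, f x - 1 := by
  have hle : ∀ x ∈ s, (Pi.single i 1 : α → ℕ) x ≤ f x := fun x _ => by
    rcases eq_or_ne x i with rfl | hx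
    · simpa [Nat.one_le_iff_ne_zero] using hf.ne'
    · simp [hx]
  simp only [Pi.sub_apply, sum_tsub_distrib s hle, sum_pi_single', if_pos hi]

theorem natCast_sub_single_single_apply (hF : 0 < F n₀ j₀) (n : ι) (j : κ) :
    (((F - Pi.single n₀ (Pi.single j₀ 1) : ι → κ → ℕ) n j : ℕ) : ℤ)
      = F n j - if n = n₀ ∧ j = j₀ then 1 else 0 := by
  rcases eq_or_ne n n₀ with rfl | hn
  · simpa using natCast_sub_single_apply hF j
  · simp [hn]

theorem surplus_sub_single (hn₀ : n₀ ∈ R) (hj₀ : j₀ ∈ C) (hF : 0 < F n₀ j₀) (hr : 0 < r n₀)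
    (hh : 0 < h j₀) (J : Finset κ) :
    surplus R C (F - Pi.single n₀ (Pi.single j₀ 1)) (r - Pi.single n₀ 1) (h - Pi.single j₀ 1) J
      = surplus R C F r h J - if j₀ ∈ J ∧ (r n₀ : ℤ) ≤ ∑ j ∈ C \ J, (F n₀ j : ℤ) then 1 else 0 := by
  have hcol : ∑ j ∈ J, ((h - Pi.single j₀ 1 : κ → ℕ) j : ℤ)
      = ∑ j ∈ J, (h j : ℤ) - if j₀ ∈ J then 1 else 0 := by
    simp only [natCast_sub_single_apply hh, sum_sub_distrib, sum_ite_eq']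
  have hrow : ∀ n, ∑ j ∈ C \ J, ((F - Pi.single n₀ (Pi.single j₀ 1) : ι → κ → ℕ) n j : ℤ)
      = ∑ j ∈ C \ J, (F n j : ℤ) - if n = n₀ ∧ j₀ ∉ J then 1 else 0 := by
    intro n
    simp only [natCast_sub_single_single_apply hF, sum_sub_distrib]
    rcases eq_or_ne n n₀ with rfl | hn
    · simp [hj₀]
    · simp [hn]
  have hload : ∀ n ∈ R.erase n₀,
      forcedLoad C (F - Pi.single n₀ (Pi.single j₀ 1)) (r - Pi.single n₀ 1) J n
        = forcedLoad C F r J n := by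
    intro n hn
    simp [forcedLoad, ne_of_mem_erase hn]
  rw [surplus, surplus, hcol, ← add_sum_erase R _ hn₀, ← add_sum_erase R _ hn₀,
    sum_congr rfl hload, forcedLoad, forcedLoad, hrow, natCast_sub_single_apply hr]
  generalize ∑ n ∈ R.erase n₀, forcedLoad C F r J n = S
  by_cases hJ : j₀ ∈ J
  · simp only [hJ, if_true, true_and, not_true_eq_false, and_false, if_false]
    split_ifs <;> omega
  · simp only [hJ, if_false, false_and, not_false_eq_true, and_true, if_true]
    omega

theorem IsRealization.of_sub_single {A : ι → κ → ℕ}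
    (hA : IsRealization R C (F - Pi.single n₀ (Pi.single j₀ 1)) (r - Pi.single n₀ 1)
      (h - Pi.single j₀ 1) A) (hn₀ : n₀ ∈ R) (hj₀ : j₀ ∈ C) (hF : 0 < F n₀ j₀) (hr : 0 < r n₀)
    (hh : 0 < h j₀) :
    IsRealization R C F r h (A + Pi.single n₀ (Pi.single j₀ 1)) := by
  obtain ⟨hle, hrow, hcol⟩ := hA
  refine ⟨fun n j => ?_, fun n hn => ?_, fun j hj => ?_⟩
  · have := hle n j
    zify at this ⊢
    rw [natCast_sub_single_single_apply hF] at this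
    simp only [Pi.add_apply, Nat.cast_add, single_single_apply]
    push_cast
    linarith
  · have := hrow n hn
    zify at this ⊢
    simp only [Pi.add_apply, Nat.cast_add, sum_add_distrib, single_single_apply] at this ⊢
    rw [natCast_sub_single_apply hr] at this
    rw [this]
    rcases eq_or_ne n n₀ with rfl | hn
    · simp [hj₀]
    · simp [hn]
  · have := hcol j hj
    zify at this ⊢
    simp only [Pi.add_apply, Nat.cast_add, sum_add_distrib, single_single_apply] at this ⊢
    rw [natCast_sub_single_apply hh] at this
    rw [this]
    rcases eq_or_ne j j₀ with rfl | hj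
    · simp [hn₀]
    · simp [hj]

theorem exists_surplus_nonneg_sub_single (hsum : ∑ j ∈ C, h j = ∑ n ∈ R, r n)
    (hcond : ∀ J ⊆ C, 0 ≤ surplus R C F r h J) (hj₀ : j₀ ∈ C) (hh : 0 < h j₀) :
    ∃ n₀ ∈ R, 0 < F n₀ j₀ ∧ 0 < r n₀ ∧ ∀ J ⊆ C, 0 ≤ surplus R C
      (F - Pi.single n₀ (Pi.single j₀ 1)) (r - Pi.single n₀ 1) (h - Pi.single j₀ 1) J := by
  obtain ⟨J₀, hJ₀C, hj₀J₀, htight, hmin⟩ := exists_minimal_tight hsum hcond hj₀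
  obtain ⟨n₀, hn₀, hF, hroom⟩ :=
    exists_pivot_row hJ₀C hj₀J₀ htight (hcond _ ((erase_subset _ _).trans hJ₀C)) hh
  have hr : 0 < r n₀ := by
    have : (0 : ℤ) ≤ ∑ j ∈ C \ J₀, (F n₀ j : ℤ) := sum_nonneg fun j _ => by positivity
    exact_mod_cast this.trans_lt hroom
  refine ⟨n₀, hn₀, hF, hr, fun J hJ => ?_⟩
  rw [surplus_sub_single hn₀ hj₀ hF hr hh]
  split_ifs with hblocked
  · -- A tight `J ∋ j₀` contains `J₀`, so row `n₀` has no more room outside `J` than outside `J₀`.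
    have hloose : surplus R C F r h J ≠ 0 := fun hzero => by
      have : ∑ j ∈ C \ J, (F n₀ j : ℤ) ≤ ∑ j ∈ C \ J₀, (F n₀ j : ℤ) :=
        sum_le_sum_of_subset_of_nonneg (sdiff_subset_sdiff le_rfl (hmin J hJ hblocked.1 hzero))
          fun _ _ _ => by positivity
      linarith [hblocked.2]
    have := hcond J hJ
    omega
  · simpa using hcond J hJ

end Reduction

theorem exists_isRealization_of_surplus_nonneg [DecidableEq ι] [DecidableEq κ] {R : Finset ι}
    {C : Finset κ} {F : ι → κ → ℕ} {r : ι → ℕ} {h : κ → ℕ}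
    (hsum : ∑ j ∈ C, h j = ∑ n ∈ R, r n) (hcond : ∀ J ⊆ C, 0 ≤ surplus R C F r h J) :
    ∃ A, IsRealization R C F r h A := by
  induction hs : ∑ j ∈ C, h j generalizing F r h with
  | zero =>
    refine ⟨0, fun _ _ => Nat.zero_le _, fun n hn => ?_, fun j hj => ?_⟩
    · simp [sum_eq_zero_iff.mp (hsum ▸ hs) n hn]
    · simp [sum_eq_zero_iff.mp hs j hj]
  | succ s ih =>
    obtain ⟨j₀, hj₀, hh⟩ := exists_ne_zero_of_sum_ne_zero (hs.trans_ne s.succ_ne_zero)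
    replace hh := Nat.pos_of_ne_zero hh
    obtain ⟨n₀, hn₀, hF, hr, hcond'⟩ := exists_surplus_nonneg_sub_single hsum hcond hj₀ hh
    have hs' := sum_sub_single_apply hj₀ hh
    have hsum' := sum_sub_single_apply hn₀ hr
    obtain ⟨A, hA⟩ := ih (by omega) hcond' (by omega)
    exact ⟨_, hA.of_sub_single hn₀ hj₀ hF hr hh⟩

theorem exists_isRealization_iff [DecidableEq κ] {R : Finset ι} {C : Finset κ}
    {F : ι → κ → ℕ} {r : ι → ℕ} {h : κ → ℕ} (hsum : ∑ j ∈ C, h j = ∑ n ∈ R, r n) :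
    (∃ A, IsRealization R C F r h A) ↔ ∀ J ⊆ C, 0 ≤ surplus R C F r h J := by
  classical
  exact ⟨fun ⟨_, hA⟩ _ hJ => surplus_nonneg_of_isRealization hA hJ,
    exists_isRealization_of_surplus_nonneg hsum⟩

theorem sum_Ioc_sub_card_le_sum {M : Type*} [AddCommMonoid M] [PartialOrder M]
    [IsOrderedAddMonoid M] {f : ℕ → M} {a b : ℕ} {S : Finset ℕ} (hS : S ⊆ Ioc a b)
    (hf : AntitoneOn f (Set.Ioc a b)) : ∑ j ∈ Ioc (b - #S) b, f j ≤ ∑ j ∈ S, f j := by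
  induction S using Finset.induction_on_min generalizing a with
  | empty => simp
  | insert m S hlt ih =>
    have hm := mem_Ioc.mp (hS (mem_insert_self m S))
    have hSm : S ⊆ Ioc m b := fun x hx =>
      mem_Ioc.mpr ⟨hlt x hx, (mem_Ioc.mp (hS (mem_insert_of_mem hx))).2⟩
    have hcard : #S ≤ b - m := (card_le_card hSm).trans (Nat.card_Ioc m b).le
    have hmS : m ∉ S := fun hmS => (hlt m hmS).false
    rw [card_insert_of_notMem hmS, ← Icc_add_one_left_eq_Ioc,
      show b - (#S + 1) + 1 = b - #S by omega, ← Ioc_insert_left (by omega),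
      sum_insert left_notMem_Ioc, sum_insert hmS]
    exact add_le_add (hf hm ⟨by omega, by omega⟩ (by omega))
      (ih hSm (hf.mono (Set.Ioc_subset_Ioc_left hm.1.le)))

section Blocks

variable {lam : ℕ} {Ts : ℕ → ℕ}

theorem sum_Ioc_eq_sum_blocks {M : Type*} [AddCommMonoid M] (hTs : MonotoneOn Ts (Set.Iic lam))
    (g : ℕ → M) :
    ∑ j ∈ Ioc (Ts 0) (Ts lam), g j = ∑ i ∈ Icc 1 lam, ∑ j ∈ Ioc (Ts (i - 1)) (Ts i), g j := by
  induction lam with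
  | zero => simp
  | succ m ih =>
    rw [sum_Icc_succ_top (by omega), ← ih (hTs.mono (Set.Iic_subset_Iic.mpr m.le_succ)),
      Nat.add_sub_cancel, sum_Ioc_consecutive _ (hTs (by simp) (by simp) m.zero_le)
        (hTs (by simp) (by simp) m.le_succ)]

theorem eq_of_mem_Ioc_of_mem_Ioc (hTs : MonotoneOn Ts (Set.Iic lam)) {i i' x : ℕ}
    (hi : i ∈ Icc 1 lam) (hi' : i' ∈ Icc 1 lam) (hx : x ∈ Ioc (Ts (i - 1)) (Ts i))
    (hx' : x ∈ Ioc (Ts (i' - 1)) (Ts i')) : i = i' := by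
  simp only [mem_Icc, mem_Ioc] at hi hi' hx hx'
  by_contra hne
  rcases Nat.lt_or_gt_of_ne hne with hlt | hlt
  · have := hTs (Set.mem_Iic.mpr hi.2) (Set.mem_Iic.mpr (by omega : i' - 1 ≤ lam))
      (by omega : i ≤ i' - 1)
    omega
  · have := hTs (Set.mem_Iic.mpr hi'.2) (Set.mem_Iic.mpr (by omega : i - 1 ≤ lam))
      (by omega : i' ≤ i - 1)
    omega

def tails (lam : ℕ) (Ts k : ℕ → ℕ) : Finset ℕ :=
  (Icc 1 lam).biUnion fun i => Ioc (Ts (i - 1) + k i) (Ts i)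

theorem tails_subset (hTs : MonotoneOn Ts (Set.Iic lam)) (k : ℕ → ℕ) :
    tails lam Ts k ⊆ Ioc (Ts 0) (Ts lam) := by
  intro x hx
  simp only [tails, mem_biUnion, mem_Icc, mem_Ioc] at hx ⊢
  obtain ⟨i, hi, hx⟩ := hx
  have h0 := hTs (by simp) (Set.mem_Iic.mpr (by omega : i - 1 ≤ lam)) (Nat.zero_le (i - 1))
  have hlam := hTs (Set.mem_Iic.mpr hi.2) (Set.mem_Iic.mpr le_rfl) hi.2
  omega

theorem Ioc_inter_tails (hTs : MonotoneOn Ts (Set.Iic lam)) (k : ℕ → ℕ) {i : ℕ}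
    (hi : i ∈ Icc 1 lam) :
    Ioc (Ts (i - 1)) (Ts i) ∩ tails lam Ts k = Ioc (Ts (i - 1) + k i) (Ts i) := by
  ext x
  simp only [tails, mem_inter, mem_biUnion]
  constructor
  · rintro ⟨hx, i', hi', hx'⟩
    have hx'' : x ∈ Ioc (Ts (i' - 1)) (Ts i') :=
      Ioc_subset_Ioc_left (Nat.le_add_right _ _) hx'
    rwa [eq_of_mem_Ioc_of_mem_Ioc hTs hi hi' hx hx'']
  · intro hx
    exact ⟨Ioc_subset_Ioc_left (Nat.le_add_right _ _) hx, i, hi, hx⟩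

theorem sum_inter_eq_sum_blocks {M : Type*} [AddCommMonoid M] (hTs : MonotoneOn Ts (Set.Iic lam))
    {J : Finset ℕ} (hJ : J ⊆ Ioc (Ts 0) (Ts lam)) (g : ℕ → M) :
    ∑ j ∈ J, g j = ∑ i ∈ Icc 1 lam, ∑ j ∈ Ioc (Ts (i - 1)) (Ts i) ∩ J, g j := by
  rw [← inter_eq_right.mpr hJ, ← sum_ite_mem, sum_Ioc_eq_sum_blocks hTs]
  simp_rw [sum_ite_mem, inter_eq_right.mpr hJ]

theorem sum_sdiff_eq_sum_card_smul {M : Type*} [AddCommMonoid M]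
    (hTs : MonotoneOn Ts (Set.Iic lam)) {g : ℕ → M}
    (hg : ∀ i ∈ Icc 1 lam, ∀ j ∈ Ioc (Ts (i - 1)) (Ts i), g j = g (Ts i)) (J : Finset ℕ) :
    ∑ j ∈ Ioc (Ts 0) (Ts lam) \ J, g j
      = ∑ i ∈ Icc 1 lam, #(Ioc (Ts (i - 1)) (Ts i) \ J) • g (Ts i) := by
  rw [sdiff_eq_filter, sum_filter, sum_Ioc_eq_sum_blocks hTs]
  refine sum_congr rfl fun i hi => ?_
  rw [← sum_filter, ← sdiff_eq_filter, ← sum_const]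
  exact sum_congr rfl fun j hj => hg i hi j (mem_sdiff.mp hj).1

theorem card_Ioc_sdiff_tails (hTs : MonotoneOn Ts (Set.Iic lam)) {k : ℕ → ℕ} {i : ℕ}
    (hi : i ∈ Icc 1 lam) (hk : k i ≤ Ts i - Ts (i - 1)) :
    #(Ioc (Ts (i - 1)) (Ts i) \ tails lam Ts k) = k i := by
  rw [← sdiff_inter_self_left, card_sdiff_of_subset inter_subset_left, Ioc_inter_tails hTs k hi,
    Nat.card_Ioc, Nat.card_Ioc]
  omega

variable {N : Finset ℕ} {F : ℕ → ℕ → ℕ} {r h : ℕ → ℕ}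

theorem surplus_tails (hTs : MonotoneOn Ts (Set.Iic lam))
    (hF : ∀ n, ∀ i ∈ Icc 1 lam, ∀ j ∈ Ioc (Ts (i - 1)) (Ts i), F n j = F n (Ts i))
    {k : ℕ → ℕ} (hk : ∀ i ∈ Icc 1 lam, k i ≤ Ts i - Ts (i - 1)) :
    surplus N (Ioc (Ts 0) (Ts lam)) F r h (tails lam Ts k)
      = ∑ i ∈ Icc 1 lam, ∑ j ∈ Ioc (Ts (i - 1) + k i) (Ts i), (h j : ℤ)
        - ∑ n ∈ N, max ((r n : ℤ) - ∑ i ∈ Icc 1 lam, (k i : ℤ) * (F n (Ts i) : ℤ)) 0 := by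
  have hcompl : ∀ n, ∑ j ∈ Ioc (Ts 0) (Ts lam) \ tails lam Ts k, (F n j : ℤ)
      = ∑ i ∈ Icc 1 lam, (k i : ℤ) * (F n (Ts i) : ℤ) := fun n => by
    rw [sum_sdiff_eq_sum_card_smul hTs fun i hi j hj => congrArg _ (hF n i hi j hj)]
    exact sum_congr rfl fun i hi => by rw [card_Ioc_sdiff_tails hTs hi (hk i hi), nsmul_eq_mul]
  have hcols : ∑ j ∈ tails lam Ts k, (h j : ℤ)
      = ∑ i ∈ Icc 1 lam, ∑ j ∈ Ioc (Ts (i - 1) + k i) (Ts i), (h j : ℤ) := by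
    rw [sum_inter_eq_sum_blocks hTs (tails_subset hTs k)]
    exact sum_congr rfl fun i hi => by rw [Ioc_inter_tails hTs k hi]
  simp only [surplus, forcedLoad, hcompl, hcols]

theorem surplus_tails_card_sdiff_le (hTs : MonotoneOn Ts (Set.Iic lam))
    (hF : ∀ n, ∀ i ∈ Icc 1 lam, ∀ j ∈ Ioc (Ts (i - 1)) (Ts i), F n j = F n (Ts i))
    (hh : ∀ i ∈ Icc 1 lam, AntitoneOn h (Set.Ioc (Ts (i - 1)) (Ts i)))
    {J : Finset ℕ} (hJ : J ⊆ Ioc (Ts 0) (Ts lam)) :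
    surplus N (Ioc (Ts 0) (Ts lam)) F r h (tails lam Ts fun i => #(Ioc (Ts (i - 1)) (Ts i) \ J))
      ≤ surplus N (Ioc (Ts 0) (Ts lam)) F r h J := by
  set k := fun i => #(Ioc (Ts (i - 1)) (Ts i) \ J)
  have hk : ∀ i, k i ≤ Ts i - Ts (i - 1) := fun i =>
    (card_le_card sdiff_subset).trans_eq (Nat.card_Ioc _ _)
  have hcompl : ∀ n, ∑ j ∈ Ioc (Ts 0) (Ts lam) \ tails lam Ts k, (F n j : ℤ)
      = ∑ j ∈ Ioc (Ts 0) (Ts lam) \ J, (F n j : ℤ) := fun n => by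
    have hFn : ∀ i ∈ Icc 1 lam, ∀ j ∈ Ioc (Ts (i - 1)) (Ts i), (F n j : ℤ) = F n (Ts i) :=
      fun i hi j hj => congrArg _ (hF n i hi j hj)
    rw [sum_sdiff_eq_sum_card_smul hTs hFn, sum_sdiff_eq_sum_card_smul hTs hFn]
    exact sum_congr rfl fun i hi => by rw [card_Ioc_sdiff_tails hTs hi (hk i)]
  have hcols : ∑ j ∈ tails lam Ts k, (h j : ℤ) ≤ ∑ j ∈ J, (h j : ℤ) := by
    rw [sum_inter_eq_sum_blocks hTs (tails_subset hTs k), sum_inter_eq_sum_blocks hTs hJ]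
    refine sum_le_sum fun i hi => ?_
    have hmono := hTs (Set.mem_Iic.mpr ((Nat.sub_le i 1).trans (mem_Icc.mp hi).2))
      (Set.mem_Iic.mpr (mem_Icc.mp hi).2) (Nat.sub_le i 1)
    have hsplit : k i + #(Ioc (Ts (i - 1)) (Ts i) ∩ J) = #(Ioc (Ts (i - 1)) (Ts i)) :=
      card_sdiff_add_card_inter _ _
    rw [Nat.card_Ioc] at hsplit
    rw [Ioc_inter_tails hTs k hi,
      show Ts (i - 1) + k i = Ts i - #(Ioc (Ts (i - 1)) (Ts i) ∩ J) by omega]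
    exact sum_Ioc_sub_card_le_sum (f := fun j => (h j : ℤ)) inter_subset_left
      fun x hx y hy hxy => Nat.cast_le.mpr (hh i hi hx hy hxy)
  simp only [surplus, forcedLoad, hcompl]
  linarith

theorem forall_surplus_nonneg_iff_forall_tails (hTs : MonotoneOn Ts (Set.Iic lam))
    (hF : ∀ n, ∀ i ∈ Icc 1 lam, ∀ j ∈ Ioc (Ts (i - 1)) (Ts i), F n j = F n (Ts i))
    (hh : ∀ i ∈ Icc 1 lam, AntitoneOn h (Set.Ioc (Ts (i - 1)) (Ts i))) :
    (∀ J ⊆ Ioc (Ts 0) (Ts lam), 0 ≤ surplus N (Ioc (Ts 0) (Ts lam)) F r h J) ↔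
      ∀ k : ℕ → ℕ, (∀ i ∈ Icc 1 lam, k i ≤ Ts i - Ts (i - 1)) →
        0 ≤ surplus N (Ioc (Ts 0) (Ts lam)) F r h (tails lam Ts k) :=
  ⟨fun hJ k _ => hJ _ (tails_subset hTs k), fun hk _ hJ =>
    (hk _ fun _ _ => (card_le_card sdiff_subset).trans_eq (Nat.card_Ioc _ _)).trans
      (surplus_tails_card_sdiff_le hTs hF hh hJ)⟩

end Blocks

end CapacitatedMargins

open CapacitatedMargins

theorem zeroOne_completion_structure_tensor_general
    (N T lam : ℕ)
    (Ts : ℕ → ℕ) (hTs0 : Ts 0 = 0) (hTsT : Ts lam = T)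
    (hTsmono : ∀ i < lam, Ts i < Ts (i + 1))
    (h r : ℕ → ℕ) (F : ℕ → ℕ → ℕ)
    (hblock : ∀ i, 1 ≤ i → i ≤ lam → ∀ j, Ts (i - 1) < j → j ≤ Ts i →
      ∀ n, F n j = F n (Ts i))
    (hmono : ∀ i, 1 ≤ i → i ≤ lam → ∀ j j', Ts (i - 1) < j → j ≤ j' → j' ≤ Ts i →
      h j' ≤ h j)
    (hsum : ∑ j ∈ Finset.Icc 1 T, h j = ∑ n ∈ Finset.Icc 1 N, r n) :
    (∃ A : ℕ → ℕ → ℕ,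
        (∀ n j, A n j ≤ F n j) ∧
        (∀ n ∈ Finset.Icc 1 N, ∑ j ∈ Finset.Icc 1 T, A n j = r n) ∧
        (∀ j ∈ Finset.Icc 1 T, ∑ n ∈ Finset.Icc 1 N, A n j = h j)) ↔
      (∀ k : ℕ → ℕ, (∀ i, 1 ≤ i → i ≤ lam → k i ≤ Ts i - Ts (i - 1)) →
        0 ≤ (∑ i ∈ Finset.Icc 1 lam,
              ∑ j ∈ Finset.Icc (Ts (i - 1) + k i + 1) (Ts i), (h j : ℤ))
            - ∑ n ∈ Finset.Icc 1 N,
                max ((r n : ℤ) - ∑ i ∈ Finset.Icc 1 lam, (k i : ℤ) * (F n (Ts i) : ℤ)) 0) := by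
  have hTs : MonotoneOn Ts (Set.Iic lam) :=
    monotoneOn_of_le_add_one Set.ordConnected_Iic fun i _ _ hi => (hTsmono i hi).le
  have hF : ∀ n, ∀ i ∈ Icc 1 lam, ∀ j ∈ Ioc (Ts (i - 1)) (Ts i), F n j = F n (Ts i) :=
    fun n i hi j hj => hblock i (mem_Icc.mp hi).1 (mem_Icc.mp hi).2 j (mem_Ioc.mp hj).1
      (mem_Ioc.mp hj).2 n
  have hh : ∀ i ∈ Icc 1 lam, AntitoneOn h (Set.Ioc (Ts (i - 1)) (Ts i)) :=
    fun i hi _ hj _ hj' hjj' => hmono i (mem_Icc.mp hi).1 (mem_Icc.mp hi).2 _ _ hj.1 hjj' hj'.2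
  have hcols : Icc 1 T = Ioc (Ts 0) (Ts lam) := by
    rw [hTs0, hTsT]
    exact Icc_add_one_left_eq_Ioc 0 T
  rw [hcols] at hsum ⊢
  refine (exists_isRealization_iff hsum).trans
    ((forall_surplus_nonneg_iff_forall_tails hTs hF hh).trans (forall_congr' fun k => ?_))
  simp only [mem_Icc, and_imp, Icc_add_one_left_eq_Ioc]
  exact imp_congr_right fun hk => by
    rw [surplus_tails hTs hF fun i hi => hk i (mem_Icc.mp hi).1 (mem_Icc.mp hi).2]

/-- Structure-tensor characterization of the non-emptiness of the class of `N × T`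
(0,1)-matrices (indexed by `1,...,N` and `1,...,T`) with row sums `r`, column sums `h`,
and zeros prescribed by a pattern matrix `F` describable by `lam + 1` special column
indices `0 = Ts 0 < Ts 1 < ... < Ts lam = T`. -/
theorem zeroOne_completion_structure_tensor
    (N T lam : ℕ) (hlam : 1 ≤ lam)
    (Ts : ℕ → ℕ) (hTs0 : Ts 0 = 0) (hTsT : Ts lam = T)
    (hTsmono : ∀ i < lam, Ts i < Ts (i + 1))
    (h r : ℕ → ℕ) (F : ℕ → ℕ → ℕ) (hF : ∀ n j, F n j ≤ 1)
    (hblock : ∀ i, 1 ≤ i → i ≤ lam → ∀ j, Ts (i - 1) < j → j ≤ Ts i →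
      ∀ n, F n j = F n (Ts i))
    (hmono : ∀ i, 1 ≤ i → i ≤ lam → ∀ j j', Ts (i - 1) < j → j ≤ j' → j' ≤ Ts i →
      h j' ≤ h j)
    (hsum : ∑ j ∈ Finset.Icc 1 T, h j = ∑ n ∈ Finset.Icc 1 N, r n) :
    (∃ A : ℕ → ℕ → ℕ,
        (∀ n j, A n j ≤ F n j) ∧
        (∀ n ∈ Finset.Icc 1 N, ∑ j ∈ Finset.Icc 1 T, A n j = r n) ∧
        (∀ j ∈ Finset.Icc 1 T, ∑ n ∈ Finset.Icc 1 N, A n j = h j)) ↔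
      (∀ k : ℕ → ℕ, (∀ i, 1 ≤ i → i ≤ lam → k i ≤ Ts i - Ts (i - 1)) →
        0 ≤ (∑ i ∈ Finset.Icc 1 lam,
              ∑ j ∈ Finset.Icc (Ts (i - 1) + k i + 1) (Ts i), (h j : ℤ))
            - ∑ n ∈ Finset.Icc 1 N,
                max ((r n : ℤ) - ∑ i ∈ Finset.Icc 1 lam, (k i : ℤ) * (F n (Ts i) : ℤ)) 0) :=
  zeroOne_completion_structure_tensor_general N T lam Ts hTs0 hTsT hTsmono h r F hblock hmono hsum
end

section
/- Let h in N^T, r in N^N, and r̄ in N^N with r̄_n ≥ 1 for all n. Suppose there exists an N×T matrix A with nonnegative integer entries, 0 ≤ A(n,j) ≤ r̄_n for all n, j, each row n summing to r_n, and each column j summing to at most h_j. If h' in N^T is majorized by h (with the convention that ||h'||_1 = ||h||_1), then there also exists such a matrix with column sums bounded by h' instead of h. -/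
open Finset

theorem Nat.exists_gap_around {p : ℕ → Prop} {a b c : ℕ} (ha : p a) (hb : p b) (hc : ¬ p c)
    (hac : a ≤ c) (hcb : c ≤ b) :
    ∃ l u, l < c ∧ c < u ∧ p l ∧ p u ∧ ∀ k, l < k → k < u → ¬ p k := by
  classical
  have hex : ∃ u, c ≤ u ∧ p u := ⟨b, hcb, hb⟩
  have hl : p (Nat.findGreatest p c) := Nat.findGreatest_spec hac ha
  have hlc : Nat.findGreatest p c < c :=
    lt_of_le_of_ne (Nat.findGreatest_le c) fun he => hc (he ▸ hl)
  obtain ⟨hcu, hu⟩ := Nat.find_spec hex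
  refine ⟨_, Nat.find hex, hlc, lt_of_le_of_ne hcu fun he => hc (he ▸ hu), hl, hu,
    fun k hlk hku => ?_⟩
  rcases le_total k c with hkc | hck
  · exact Nat.findGreatest_is_greatest hlk hkc
  · exact fun hk => Nat.find_min hex hku ⟨hck, hk⟩

section Excess

variable {ι : Type*} [Fintype ι]

def excess (x : ι → ℕ) (c : ℕ) : ℕ := ∑ i, (x i - c)

theorem excess_zero (x : ι → ℕ) : excess x 0 = ∑ i, x i := by
  simp [excess]

theorem excess_eq_zero_of_le {x : ι → ℕ} {c : ℕ} (h : ∀ i, x i ≤ c) : excess x c = 0 :=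
  sum_eq_zero fun i _ => Nat.sub_eq_zero_of_le (h i)

theorem excess_eq_excess_succ_add_card (x : ι → ℕ) (c : ℕ) :
    excess x c = excess x (c + 1) + #{i | c + 1 ≤ x i} := by
  rw [excess, excess, card_filter, ← sum_add_distrib]
  refine sum_congr rfl fun i _ => ?_
  split_ifs <;> omega

theorem card_eq_add_card_succ_le (x : ι → ℕ) (c : ℕ) :
    #{i | x i = c} + #{i | c + 1 ≤ x i} = #{i | c ≤ x i} := by
  simp only [card_filter, ← sum_add_distrib]
  refine sum_congr rfl fun i _ => ?_
  split_ifs <;> omega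

theorem exists_eq_of_card_succ_le_lt {x : ι → ℕ} {c : ℕ}
    (h : #{i | c + 1 ≤ x i} < #{i | c ≤ x i}) : ∃ i, x i = c := by
  have hpos : 0 < #{i | x i = c} := by have := card_eq_add_card_succ_le x c; omega
  obtain ⟨i, hi⟩ := card_pos.1 hpos
  exact ⟨i, (mem_filter.1 hi).2⟩

theorem sum_le_excess_add (x : ι → ℕ) (s : Finset ι) (c : ℕ) :
    ∑ i ∈ s, x i ≤ excess x c + #s * c :=
  calc ∑ i ∈ s, x i ≤ ∑ i ∈ s, ((x i - c) + c) := sum_le_sum fun i _ => by omega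
    _ = ∑ i ∈ s, (x i - c) + #s * c := by rw [sum_add_distrib, sum_const, smul_eq_mul]
    _ ≤ excess x c + #s * c := by
      gcongr
      exact sum_le_sum_of_subset (subset_univ s)

theorem excess_add_card_mul (x : ι → ℕ) (c : ℕ) :
    excess x c + #{i | c < x i} * c = ∑ i ∈ {i | c < x i}, x i := by
  have hout : ∀ i ∈ univ, i ∉ ({i | c < x i} : Finset ι) → x i - c = 0 := fun i _ hi => by
    simp only [mem_filter, mem_univ, true_and, not_lt] at hi; omega
  rw [excess, ← sum_subset (subset_univ _) hout, ← smul_eq_mul, ← sum_const, ← sum_add_distrib]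
  refine sum_congr rfl fun i hi => ?_
  have := (mem_filter.1 hi).2
  omega

variable {x y : ι → ℕ}

theorem exists_eq_of_excess_eq_of_lt_succ (hexc : ∀ c, excess y c ≤ excess x c) {l : ℕ}
    (hl : excess x l = excess y l) (hlt : excess y (l + 1) < excess x (l + 1)) :
    ∃ j, x j = l := by
  refine exists_eq_of_card_succ_le_lt ?_
  have hx := excess_eq_excess_succ_add_card x l
  have hy := excess_eq_excess_succ_add_card y l
  have hy' : #{i | l + 1 ≤ y i} ≤ #{i | l ≤ y i} := by
    have := card_eq_add_card_succ_le y l; omega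
  suffices #{i | l ≤ y i} ≤ #{i | l ≤ x i} by omega
  rcases l with _ | m
  · simp
  · have := hexc m
    have := excess_eq_excess_succ_add_card x m
    have := excess_eq_excess_succ_add_card y m
    omega

theorem exists_eq_succ_of_excess_eq_of_lt (hexc : ∀ c, excess y c ≤ excess x c) {m : ℕ}
    (hm : excess x (m + 1) = excess y (m + 1)) (hlt : excess y m < excess x m) :
    ∃ i, x i = m + 1 := by
  refine exists_eq_of_card_succ_le_lt ?_
  have := hexc (m + 1 + 1)
  have := excess_eq_excess_succ_add_card x m
  have := excess_eq_excess_succ_add_card y m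
  have := excess_eq_excess_succ_add_card x (m + 1)
  have := excess_eq_excess_succ_add_card y (m + 1)
  have := card_eq_add_card_succ_le y (m + 1)
  omega

theorem exists_perm_of_excess_eq (h : ∀ c, excess x c = excess y c) :
    ∃ σ : Equiv.Perm ι, y = x ∘ σ := by
  have hle : ∀ c, #{i | c ≤ x i} = #{i | c ≤ y i} := by
    rintro (_ | c)
    · simp
    · have := h c
      have := h (c + 1)
      have := excess_eq_excess_succ_add_card x c
      have := excess_eq_excess_succ_add_card y c
      omega
  have hfib : ∀ c, Fintype.card {i // y i = c} = Fintype.card {i // x i = c} := fun c => by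
    have := card_eq_add_card_succ_le x c
    have := card_eq_add_card_succ_le y c
    have := hle c
    have := hle (c + 1)
    simp only [Fintype.card_subtype]
    omega
  exact ⟨Equiv.ofFiberEquiv fun c => Fintype.equivOfCardEq (hfib c),
    funext fun i => (Equiv.ofFiberEquiv_map _ i).symm⟩

end Excess

section Transfer

variable {ι : Type*} [DecidableEq ι]

def transfer (x : ι → ℕ) (i j : ι) : ι → ℕ :=
  Function.update (Function.update x i (x i - 1)) j (x j + 1)

theorem transfer_apply (x : ι → ℕ) (i j k : ι) :
    transfer x i j k = if k = j then x j + 1 else if k = i then x i - 1 else x k := by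
  simp only [transfer, Function.update_apply]

variable [Fintype ι]

theorem sum_comp_transfer {M : Type*} [AddCommMonoid M] (g : ℕ → M) (x : ι → ℕ) {i j : ι}
    (hij : i ≠ j) :
    ∑ k, g (transfer x i j k) + (g (x i) + g (x j)) =
      ∑ k, g (x k) + (g (x i - 1) + g (x j + 1)) := by
  have hi : i ∈ univ.erase j := mem_erase.2 ⟨hij, mem_univ i⟩
  have hrest : ∑ k ∈ (univ.erase j).erase i, g (transfer x i j k)
      = ∑ k ∈ (univ.erase j).erase i, g (x k) :=
    sum_congr rfl fun k hk => by
      rw [transfer_apply, if_neg (ne_of_mem_erase (mem_of_mem_erase hk)),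
        if_neg (ne_of_mem_erase hk)]
  rw [← add_sum_erase _ _ (mem_univ j), ← add_sum_erase _ _ hi,
    ← add_sum_erase _ (fun k => g (x k)) (mem_univ j), ← add_sum_erase _ (fun k => g (x k)) hi,
    hrest, transfer_apply, transfer_apply, if_pos rfl, if_neg hij, if_pos rfl]
  abel

theorem sum_transfer {x : ι → ℕ} {i j : ι} (h : x j < x i) :
    ∑ k, transfer x i j k = ∑ k, x k := by
  have := sum_comp_transfer id x (ne_of_apply_ne x h.ne')
  simp only [id] at this
  omega

theorem sum_sq_transfer_lt {x : ι → ℕ} {i j : ι} (h : x j + 1 < x i) :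
    ∑ k, transfer x i j k ^ 2 < ∑ k, x k ^ 2 := by
  have key := sum_comp_transfer (· ^ 2) x (ne_of_apply_ne x (by omega : x i ≠ x j))
  obtain ⟨d, hd⟩ := Nat.exists_eq_add_of_lt h
  simp only [hd] at key
  rw [Nat.add_sub_cancel] at key
  nlinarith

theorem excess_transfer {x : ι → ℕ} {i j : ι} (h : x j < x i) (c : ℕ) :
    excess (transfer x i j) c + (if x j < c ∧ c < x i then 1 else 0) = excess x c := by
  have := sum_comp_transfer (· - c) x (ne_of_apply_ne x h.ne')
  rw [excess, excess]
  split_ifs <;> omega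

variable {x y : ι → ℕ}

theorem exists_transfer_of_excess_lt (hsum : ∑ i, y i = ∑ i, x i)
    (hexc : ∀ c, excess y c ≤ excess x c) {c₀ : ℕ} (hc₀ : excess y c₀ < excess x c₀) :
    ∃ i j, x j + 1 < x i ∧ ∀ c, excess y c ≤ excess (transfer x i j) c := by
  have hbig : excess x (∑ i, x i + c₀) = 0 := excess_eq_zero_of_le fun i =>
    le_add_right (single_le_sum (fun _ _ => Nat.zero_le _) (mem_univ i))
  obtain ⟨l, u, hlc, hcu, hl, hu, hgap⟩ :=
    Nat.exists_gap_around (p := fun c => excess x c = excess y c) (b := ∑ i, x i + c₀)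
      (by simp [excess_zero, hsum]) (by have := hexc (∑ i, x i + c₀); omega) hc₀.ne'
      (Nat.zero_le c₀) (le_add_left le_rfl)
  have hpos : ∀ c, l < c → c < u → excess y c < excess x c := fun c hlc hcu =>
    lt_of_le_of_ne (hexc c) (Ne.symm (hgap c hlc hcu))
  obtain ⟨j, hj⟩ := exists_eq_of_excess_eq_of_lt_succ hexc hl (hpos _ (by omega) (by omega))
  obtain ⟨m, rfl⟩ : ∃ m, u = m + 1 := ⟨u - 1, by omega⟩
  obtain ⟨i, hi⟩ := exists_eq_succ_of_excess_eq_of_lt hexc hu (hpos _ (by omega) (by omega))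
  refine ⟨i, j, by omega, fun c => ?_⟩
  have htr := excess_transfer (x := x) (i := i) (j := j) (by omega) c
  split_ifs at htr with hc
  · have := hpos c (by omega) (by omega); omega
  · have := hexc c; omega

theorem induction_on_transfers {P : (ι → ℕ) → Prop}
    (perm : ∀ x (σ : Equiv.Perm ι), P x → P (x ∘ σ))
    (step : ∀ x i j, x j + 1 < x i → P x → P (transfer x i j))
    (hsum : ∑ i, y i = ∑ i, x i) (hexc : ∀ c, excess y c ≤ excess x c) (hx : P x) : P y := by
  induction hΦ : ∑ i, x i ^ 2 using Nat.strong_induction_on generalizing x with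
  | _ Φ ih =>
    by_cases heq : ∀ c, excess x c = excess y c
    · obtain ⟨σ, rfl⟩ := exists_perm_of_excess_eq heq
      exact perm x σ hx
    obtain ⟨c₀, hc₀⟩ := not_forall.1 heq
    obtain ⟨i, j, hij, hexc'⟩ :=
      exists_transfer_of_excess_lt hsum hexc (lt_of_le_of_ne (hexc c₀) (Ne.symm hc₀))
    exact ih _ (hΦ ▸ sum_sq_transfer_lt hij) (by rw [sum_transfer (by omega), hsum]) hexc'
      (step x i j hij hx) rfl

end Transfer

theorem excess_le_excess_of_topSum_le {T : ℕ} {x y : Fin T → ℕ}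
    (hmaj : ∀ k, topSum y k ≤ topSum x k) (c : ℕ) : excess y c ≤ excess x c := by
  have hy := excess_add_card_mul y c
  set S : Finset (Fin T) := {i | c < y i}
  have hS : ∑ i ∈ S, y i ≤ topSum y #S :=
    le_sup (f := fun S => ∑ i ∈ S, y i) (mem_filter.2 ⟨mem_powerset.2 (subset_univ S), le_rfl⟩)
  have hx : topSum x #S ≤ excess x c + #S * c := Finset.sup_le fun s hs =>
    (sum_le_excess_add x s c).trans (by have := (mem_filter.1 hs).2; gcongr)
  have := hmaj #S
  omega

section RateClass

variable {κ ι : Type*} [Fintype κ] [Fintype ι]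

/-- The class `A(h, r, r̄, E)` of the paper, for the all-ones pattern `E`. -/
def rateClass (h : ι → ℕ) (r rbar : κ → ℕ) : Set (κ → ι → ℕ) :=
  {A | (∀ n j, A n j ≤ rbar n) ∧ (∀ n, ∑ j, A n j = r n) ∧ ∀ j, ∑ n, A n j ≤ h j}

variable {r rbar : κ → ℕ}

theorem rateClass_nonempty_comp_perm {h : ι → ℕ} (σ : Equiv.Perm ι)
    (hA : (rateClass h r rbar).Nonempty) : (rateClass (h ∘ σ) r rbar).Nonempty := by
  obtain ⟨A, hcap, hrow, hcol⟩ := hA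
  exact ⟨fun n j => A n (σ j), fun n j => hcap n (σ j),
    fun n => (Equiv.sum_comp σ (A n)).trans (hrow n), fun j => hcol (σ j)⟩

theorem rateClass_nonempty_transfer [DecidableEq ι] {h : ι → ℕ} {i j : ι}
    (hij : h j < h i) (hA : (rateClass h r rbar).Nonempty) :
    (rateClass (transfer h i j) r rbar).Nonempty := by
  classical
  obtain ⟨A, hcap, hrow, hcol⟩ := hA
  by_cases hslack : ∑ n, A n i < h i
  · refine ⟨A, hcap, hrow, fun k => ?_⟩
    have := hcol k
    rw [transfer_apply]
    split_ifs with hkj hki <;> subst_vars <;> omega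
  obtain ⟨n₀, -, hn₀⟩ : ∃ n ∈ univ, A n j < A n i :=
    exists_lt_of_sum_lt (by have := hcol j; omega)
  let B : κ → ι → ℕ := Function.update A n₀ (transfer (A n₀) i j)
  have hcolB : ∀ k, ∑ n, B n k + A n₀ k = ∑ n, A n k + transfer (A n₀) i j k := fun k => by
    have hrest : ∑ n ∈ univ.erase n₀, B n k = ∑ n ∈ univ.erase n₀, A n k :=
      sum_congr rfl fun n hn => by simp [B, Function.update_of_ne (ne_of_mem_erase hn)]
    rw [← add_sum_erase _ _ (mem_univ n₀), ← add_sum_erase _ (fun n => A n k) (mem_univ n₀),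
      hrest]
    simp only [B, Function.update_self]
    ring
  refine ⟨B, fun n k => ?_, fun n => ?_, fun k => ?_⟩
  · rcases eq_or_ne n n₀ with rfl | hn
    · have := hcap n i
      have := hcap n k
      simp only [B, Function.update_self, transfer_apply]
      split_ifs <;> subst_vars <;> omega
    · simpa [B, Function.update_of_ne hn] using hcap n k
  · rcases eq_or_ne n n₀ with rfl | hn
    · simpa [B] using (sum_transfer hn₀).trans (hrow n)
    · simpa [B, Function.update_of_ne hn] using hrow n
  · have := hcolB k
    have := hcol k
    have := hcol i
    simp only [transfer_apply] at *
    split_ifs at * <;> subst_vars <;> omega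

theorem rateClass_nonempty_of_excess_le {h h' : ι → ℕ}
    (hsum : ∑ j, h' j = ∑ j, h j) (hexc : ∀ c, excess h' c ≤ excess h c)
    (hA : (rateClass h r rbar).Nonempty) : (rateClass h' r rbar).Nonempty := by
  classical
  exact induction_on_transfers (P := fun h => (rateClass h r rbar).Nonempty)
    (fun _ σ => rateClass_nonempty_comp_perm σ)
    (fun _ _ _ hij => rateClass_nonempty_transfer (by omega)) hsum hexc hA

end RateClass

theorem rate_constrained_of_majorized_general (N T : ℕ) (h h' : Fin T → ℕ)
    (r rbar : Fin N → ℕ)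
    (hsum : ∑ j, h' j = ∑ j, h j)
    (hmaj : ∀ k, topSum h' k ≤ topSum h k) :
    (∃ A : Fin N → Fin T → ℕ,
        (∀ n j, A n j ≤ rbar n) ∧
        (∀ n, ∑ j, A n j = r n) ∧
        (∀ j, ∑ n, A n j ≤ h j)) →
      (∃ A : Fin N → Fin T → ℕ,
        (∀ n j, A n j ≤ rbar n) ∧
        (∀ n, ∑ j, A n j = r n) ∧
        (∀ j, ∑ n, A n j ≤ h' j)) :=
  rateClass_nonempty_of_excess_le hsum (excess_le_excess_of_topSum_le hmaj)

/-- Rate-constrained analogue: if a nonnegative integer matrix with row caps `rbar`,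
exact row sums `r` and column sums bounded by `h` exists, and `h'` is majorized by `h`,
then such a matrix with column sums bounded by `h'` also exists. -/
theorem rate_constrained_of_majorized (N T : ℕ) (h h' : Fin T → ℕ)
    (r rbar : Fin N → ℕ) (hrbar : ∀ n, 1 ≤ rbar n)
    (hsum : ∑ j, h' j = ∑ j, h j)
    (hmaj : ∀ k, topSum h' k ≤ topSum h k) :
    (∃ A : Fin N → Fin T → ℕ,
        (∀ n j, A n j ≤ rbar n) ∧
        (∀ n, ∑ j, A n j = r n) ∧
        (∀ j, ∑ n, A n j ≤ h j)) →
      (∃ A : Fin N → Fin T → ℕ,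
        (∀ n j, A n j ≤ rbar n) ∧
        (∀ n, ∑ j, A n j = r n) ∧
        (∀ j, ∑ n, A n j ≤ h' j)) :=
  rate_constrained_of_majorized_general N T h h' r rbar hsum hmaj
end

section
/- Load decomposition: let r, r̄ be nonnegative integers with r̄ ≥ 1, and write r = q·r̄ + p with 0 ≤ p < r̄. A vector c in N^T satisfies 0 ≤ c_j ≤ r̄ for all j and Σ_j c_j = r if and only if c can be written as a sum of r̄ vectors in {0,1}^T, of which p have exactly q+1 ones and r̄ − p have exactly q ones. -/
/-!
Lay the `∑ j, c j` units of load out in a line, slot after slot, and deal them to the `m` rows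
in round-robin. Among the first `s` units, row `i < m` receives `(s + i) / m`; by Hermite's
identity `∑ i < m, (s + i) / m = s` every unit goes to exactly one row, and since a slot carries
at most `m` consecutive units, no row receives two units in the same slot. Row `i` receives
`(r + i) / m` units in total, which is `q` or `q + 1`; counting then forces exactly `p` rows of
size `q + 1`.
-/

open Finset

theorem Nat.sum_range_add_div (n : ℕ) {m : ℕ} (hm : 0 < m) :
    ∑ i ∈ range m, (n + i) / m = n := by
  induction n with
  | zero => exact sum_eq_zero fun i hi => Nat.div_eq_of_lt (by simpa using hi)
  | succ n ih =>
    have shift := (sum_range_succ (fun i => (n + i) / m) m).symm.trans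
      (sum_range_succ' (fun i => (n + i) / m) m)
    rw [ih, Nat.add_div_right n hm] at shift
    simp only [← add_assoc, add_zero, add_right_comm n _ 1] at shift
    omega

theorem Finset.sum_eq_mul_card_add_card_filter {ι : Type*} (s : Finset ι) (a : ι → ℕ) (q : ℕ)
    (h : ∀ i ∈ s, a i = q + 1 ∨ a i = q) :
    ∑ i ∈ s, a i = q * #s + #{i ∈ s | a i = q + 1} := by
  have split : ∀ i ∈ s, a i = q + if a i = q + 1 then 1 else 0 := fun i hi => by
    rcases h i hi with h | h <;> simp [h]
  rw [sum_congr rfl split, sum_add_distrib, sum_const, smul_eq_mul, mul_comm, sum_boole,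
    Nat.cast_id]

theorem Nat.div_eq_or_eq_succ_of_lt {m p i : ℕ} (q : ℕ) (hp : p < m) (hi : i < m) :
    (q * m + p + i) / m = q + 1 ∨ (q * m + p + i) / m = q := by
  have hm : 0 < m := Nat.zero_lt_of_lt hp
  have lower : q ≤ (q * m + p + i) / m := (Nat.le_div_iff_mul_le hm).2 (by omega)
  have upper : (q * m + p + i) / m < q + 2 := (Nat.div_lt_iff_lt_mul hm).2 (by nlinarith)
  omega

section RoundRobin

variable (m : ℕ) (c : ℕ → ℕ)

def roundRobin (i j : ℕ) : ℕ :=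
  (∑ k ∈ range (j + 1), c k + i) / m - (∑ k ∈ range j, c k + i) / m

theorem monotone_sum_range_add_div (i : ℕ) :
    Monotone fun j => (∑ k ∈ range j, c k + i) / m := fun _ _ h =>
  Nat.div_le_div_right (Nat.add_le_add_right (sum_le_sum_of_subset (range_mono h)) i)

variable {m c}

theorem roundRobin_le_one (hc : ∀ j, c j ≤ m) (hm : 0 < m) (i j : ℕ) :
    roundRobin m c i j ≤ 1 := by
  have step : (∑ k ∈ range (j + 1), c k + i) / m ≤ (∑ k ∈ range j, c k + i) / m + 1 := by
    rw [← Nat.add_div_right _ hm]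
    exact Nat.div_le_div_right (by rw [sum_range_succ]; have := hc j; omega)
  unfold roundRobin
  omega

theorem sum_rows_roundRobin (hm : 0 < m) (j : ℕ) :
    ∑ i ∈ range m, roundRobin m c i j = c j := by
  simp only [roundRobin]
  rw [sum_tsub_distrib _ fun i _ => monotone_sum_range_add_div m c i j.le_succ,
    Nat.sum_range_add_div _ hm, Nat.sum_range_add_div _ hm, sum_range_succ]
  omega

theorem sum_slots_roundRobin {i : ℕ} (hi : i < m) (T : ℕ) :
    ∑ j ∈ range T, roundRobin m c i j = (∑ k ∈ range T, c k + i) / m := by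
  simp only [roundRobin]
  rw [sum_range_tsub (monotone_sum_range_add_div m c i), sum_range_zero, zero_add,
    Nat.div_eq_of_lt hi, Nat.sub_zero]

end RoundRobin

theorem exists_zero_one_decomposition {T m : ℕ} (hm : 0 < m) (c : Fin T → ℕ)
    (hc : ∀ j, c j ≤ m) :
    ∃ f : Fin m → Fin T → ℕ, (∀ i j, f i j ≤ 1) ∧ (∀ j, ∑ i, f i j = c j) ∧
      ∀ i : Fin m, ∑ j, f i j = (∑ j, c j + i) / m := by
  set c' : ℕ → ℕ := fun k => if h : k < T then c ⟨k, h⟩ else 0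
  have hc' : ∀ j : Fin T, c' j = c j := fun j => dif_pos j.isLt
  have hc'_le : ∀ k, c' k ≤ m := fun k => by
    unfold c'; split_ifs
    exacts [hc _, Nat.zero_le m]
  refine ⟨fun i j => roundRobin m c' i j, fun i j => roundRobin_le_one hc'_le hm i j,
    fun j => ?_, fun i => ?_⟩
  · rw [Fin.sum_univ_eq_sum_range (fun i => roundRobin m c' i j), sum_rows_roundRobin hm,
      hc']
  · rw [Fin.sum_univ_eq_sum_range (roundRobin m c' i), sum_slots_roundRobin i.isLt,
      ← Fin.sum_univ_eq_sum_range]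
    simp only [hc']

theorem load_decomposition_general (T r rbar p q : ℕ)
    (hp : p < rbar) (hr : r = q * rbar + p) (c : Fin T → ℕ) :
    ((∀ j, c j ≤ rbar) ∧ (∑ j, c j = r)) ↔
      (∃ f : Fin rbar → Fin T → ℕ,
        (∀ i j, f i j ≤ 1) ∧
        (∀ j, ∑ i, f i j = c j) ∧
        (Finset.univ.filter (fun i : Fin rbar => (∑ j, f i j) = q + 1)).card = p ∧
        (∀ i, (∑ j, f i j = q + 1) ∨ (∑ j, f i j = q))) := by
  have total : ∀ f : Fin rbar → Fin T → ℕ, (∀ j, ∑ i, f i j = c j) →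
      ∑ j, c j = ∑ i, ∑ j, f i j := fun f hcol => by
    rw [sum_comm]; exact sum_congr rfl fun j _ => (hcol j).symm
  constructor
  · rintro ⟨hle, hsum⟩
    obtain ⟨f, hf01, hcol, hrow⟩ := exists_zero_one_decomposition (Nat.zero_lt_of_lt hp) c hle
    have hrow' : ∀ i, ∑ j, f i j = q + 1 ∨ ∑ j, f i j = q := fun i => by
      rw [hrow, hsum, hr]; exact Nat.div_eq_or_eq_succ_of_lt q hp i.isLt
    refine ⟨f, hf01, hcol, ?_, hrow'⟩
    have count := sum_eq_mul_card_add_card_filter univ _ q fun i _ => hrow' i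
    rw [← total f hcol, hsum, hr, card_univ, Fintype.card_fin] at count
    omega
  · rintro ⟨f, hf01, hcol, hcard, hrow⟩
    refine ⟨fun j => ?_, ?_⟩
    · rw [← hcol j]
      simpa using sum_le_card_nsmul univ (f · j) 1 fun i _ => hf01 i j
    · rw [total f hcol, sum_eq_mul_card_add_card_filter univ _ q fun i _ => hrow i, hcard, hr,
        card_univ, Fintype.card_fin]

/-- Load decomposition: a charging profile `c` with entries capped by `rbar` and total `r`
exists exactly when it decomposes as a sum of `rbar` (0,1)-profiles, `p` of which have
exactly `q + 1` ones and the remaining `rbar - p` of which have exactly `q` ones, where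
`r = q * rbar + p` with `0 ≤ p < rbar`. -/
theorem load_decomposition (T r rbar p q : ℕ) (hrbar : 1 ≤ rbar)
    (hp : p < rbar) (hr : r = q * rbar + p) (c : Fin T → ℕ) :
    ((∀ j, c j ≤ rbar) ∧ (∑ j, c j = r)) ↔
      (∃ f : Fin rbar → Fin T → ℕ,
        (∀ i j, f i j ≤ 1) ∧
        (∀ j, ∑ i, f i j = c j) ∧
        (Finset.univ.filter (fun i : Fin rbar => (∑ j, f i j) = q + 1)).card = p ∧
        (∀ i, (∑ j, f i j = q + 1) ∨ (∑ j, f i j = q))) :=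
  load_decomposition_general T r rbar p q hp hr c
end
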